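/- Let λ: [t_0, t_1] → [0, λ_max] be a measurable intensity function. Sample K ~ Poisson(λ_max (t_1 - t_0)), U_1, U_2, ... i.i.d. Uniform[t_0, t_1], and V_1, V_2, ... i.i.d. Uniform[0,1], all independent. Then Z = prod_{i=1}^{K} 1{V_i ≤ (λ_max - λ(U_i))/λ_max} satisfies E[Z] = exp(-∫_{t_0}^{t_1} λ(s) ds). -/

import Mathlib

/-!
Conditionally on `K = k`, the coin is the event that all `k` candidate points are rejected, and
each is rejected independently with probability `q = 1 - I / Λ`, where `I = ∫_{t₀}^{t₁} λ` and
`Λ = λmax (t₁ - t₀)`. Hence `E[Z] = ∑ₖ e^{-Λ} Λᵏ / k! · qᵏ = e^{-Λ (1 - q)} = e^{-I}`.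
The independence of `K` and the pairs `(U i, V i)` comes from grouping the independent family
`K, U 0, V 0, U 1, …` into disjoint blocks.
-/

open MeasureTheory ProbabilityTheory Function Set

theorem Real.hasSum_poisson_mul_pow (Λ q : ℝ) :
    HasSum (fun k : ℕ => Real.exp (-Λ) * Λ ^ k / k.factorial * q ^ k)
      (Real.exp (-(Λ * (1 - q)))) := by
  have h := (NormedSpace.expSeries_div_hasSum_exp (Λ * q)).mul_left (Real.exp (-Λ))
  rw [← Real.exp_eq_exp_ℝ, ← Real.exp_add] at h
  have hterm : (fun k : ℕ => Real.exp (-Λ) * Λ ^ k / k.factorial * q ^ k)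
      = fun k => Real.exp (-Λ) * ((Λ * q) ^ k / k.factorial) := by
    funext k; rw [mul_pow]; ring
  rwa [hterm, show -(Λ * (1 - q)) = -Λ + Λ * q by ring]

theorem ENNReal.tsum_ofReal_poisson_mul_pow {Λ q : ℝ} (hΛ : 0 ≤ Λ) (hq : 0 ≤ q) :
    ∑' k : ℕ, ENNReal.ofReal (Real.exp (-Λ) * Λ ^ k / k.factorial) * ENNReal.ofReal q ^ k
      = ENNReal.ofReal (Real.exp (-(Λ * (1 - q)))) := by
  have hterm : ∀ k : ℕ,
      ENNReal.ofReal (Real.exp (-Λ) * Λ ^ k / k.factorial) * ENNReal.ofReal q ^ k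
        = ENNReal.ofReal (Real.exp (-Λ) * Λ ^ k / k.factorial * q ^ k) := fun k => by
    rw [← ENNReal.ofReal_pow hq, ← ENNReal.ofReal_mul (by positivity)]
  rw [tsum_congr hterm, ← ENNReal.ofReal_tsum_of_nonneg (fun k => by positivity)
    (Real.hasSum_poisson_mul_pow Λ q).summable, (Real.hasSum_poisson_mul_pow Λ q).tsum_eq]

theorem integrableOn_Icc_of_mem_Icc {a b L : ℝ} {f : ℝ → ℝ} (hf : Measurable f)
    (hrange : ∀ s ∈ Icc a b, f s ∈ Icc 0 L) : IntegrableOn f (Icc a b) :=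
  IntegrableOn.of_bound measure_Icc_lt_top hf.aestronglyMeasurable L <|
    ae_restrict_of_forall_mem measurableSet_Icc fun s hs => by
      rw [Real.norm_of_nonneg (hrange s hs).1]; exact (hrange s hs).2

theorem lintegral_ofReal_uniform_Icc {a b : ℝ} (hab : a < b) {f : ℝ → ℝ}
    (hf : IntegrableOn f (Icc a b)) (hf0 : ∀ x ∈ Icc a b, 0 ≤ f x) :
    ∫⁻ x, ENNReal.ofReal (f x) ∂((ENNReal.ofReal (b - a))⁻¹ • volume.restrict (Icc a b))
      = ENNReal.ofReal ((∫ x in a..b, f x) / (b - a)) := by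
  have hba : 0 < b - a := sub_pos.mpr hab
  rw [lintegral_smul_measure, ← ofReal_integral_eq_lintegral_ofReal hf
      (ae_restrict_of_forall_mem measurableSet_Icc hf0),
    integral_Icc_eq_integral_Ioc, ← intervalIntegral.integral_of_le hab.le,
    ← ENNReal.ofReal_inv_of_pos hba, smul_eq_mul, ← ENNReal.ofReal_mul (inv_nonneg.mpr hba.le),
    inv_mul_eq_div]

section

variable {Ω : Type*} {mΩ : MeasurableSpace Ω} {μ : Measure Ω}

theorem integral_prod_range_ite_eq_measureReal {K : Ω → ℕ} (hK : Measurable K)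
    {P : ℕ → Ω → Prop} [∀ i, DecidablePred (P i)] (hP : ∀ i, MeasurableSet {ω | P i ω}) :
    ∫ ω, ∏ i ∈ Finset.range (K ω), (if P i ω then (1 : ℝ) else 0) ∂μ
      = μ.real {ω | ∀ i < K ω, P i ω} := by
  have hS : MeasurableSet {ω | ∀ i < K ω, P i ω} := by
    rw [ofPred_forall]
    exact MeasurableSet.iInter fun i => (measurableSet_lt measurable_const hK).imp (hP i)
  rw [← integral_indicator_one hS]
  congr 1 with ω
  simp [Finset.prod_boole, indicator_apply]

namespace ProbabilityTheory

theorem iIndep.iIndep_biSup {ι κ : Type*} {m : ι → MeasurableSpace Ω} (h_le : ∀ i, m i ≤ mΩ)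
    (h : iIndep m μ) {B : κ → Set ι} (hB : Pairwise (Disjoint on B)) :
    iIndep (fun j => ⨆ i ∈ B j, m i) μ := by
  classical
  have := h.isProbabilityMeasure
  rw [iIndep_iff]
  intro s
  induction s using Finset.induction_on with
  | empty => intro f _; simp
  | insert a s ha ih =>
    intro f hf
    have hdisj : Disjoint (B a) (⋃ j ∈ s, B j) :=
      disjoint_iUnion₂_right.mpr fun j hj => hB (ne_of_mem_of_not_mem hj ha).symm
    have hrest : MeasurableSet[⨆ i ∈ ⋃ j ∈ s, B j, m i] (⋂ j ∈ s, f j) :=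
      Finset.measurableSet_biInter s fun j hj =>
        (biSup_mono fun i hi => mem_biUnion hj hi :
          (⨆ i ∈ B j, m i) ≤ ⨆ i ∈ ⋃ j ∈ s, B j, m i) _ (hf j (Finset.mem_insert_of_mem hj))
    rw [Finset.set_biInter_insert, Finset.prod_insert ha,
      ← ih fun j hj => hf j (Finset.mem_insert_of_mem hj)]
    exact (Indep_iff _ _ μ).mp (indep_iSup_of_disjoint h_le h hdisj) _ _
      (hf a (Finset.mem_insert_self a s)) hrest

theorem iIndep.measure_forall_lt_mem {M : Option ℕ → MeasurableSpace Ω}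
    (hle : ∀ j, M j ≤ mΩ) (hM : iIndep M μ) {K : Ω → ℕ} (hK : Measurable[M none] K)
    {C : ℕ → Set Ω} (hC : ∀ i, MeasurableSet[M (some i)] (C i)) {r : ENNReal}
    (hCr : ∀ i, μ (C i) = r) :
    μ {ω | ∀ i < K ω, ω ∈ C i} = ∑' k, μ {ω | K ω = k} * r ^ k := by
  have hKk : ∀ k, MeasurableSet[M none] {ω | K ω = k} := fun k => hK (measurableSet_singleton k)
  have hdecomp : {ω | ∀ i < K ω, ω ∈ C i} = ⋃ k, {ω | K ω = k} ∩ ⋂ i ∈ Finset.range k, C i := by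
    ext ω; simp
  have hblock : ∀ k, {ω | K ω = k} ∩ ⋂ i ∈ Finset.range k, C i
      = ⋂ j ∈ (Finset.range k).insertNone, j.elim {ω | K ω = k} C := by
    intro k; ext ω; simp [Finset.mem_insertNone, Option.forall]
  rw [hdecomp, measure_iUnion]
  · congr 1; funext k
    rw [hblock, hM.meas_biInter, Finset.prod_insertNone]
    · simp [hCr]
    · rintro (_ | i) _
      exacts [hKk k, hC i]
  · intro k k' hne
    exact Disjoint.mono inter_subset_left inter_subset_left
      (disjoint_left.mpr fun ω h h' => hne (h.symm.trans h'))
  · exact fun k => (hle none _ (hKk k)).inter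
      (Finset.measurableSet_biInter _ fun i _ => hle _ _ (hC i))

theorem IndepFun.measure_le_comp_eq_lintegral [IsFiniteMeasure μ]
    {U V : Ω → ℝ} (hU : Measurable U) (hV : Measurable V) (hUV : IndepFun U V μ)
    (hVlaw : μ.map V = volume.restrict (Icc 0 1)) {p : ℝ → ℝ} (hp : Measurable p)
    (hp1 : ∀ᵐ u ∂μ.map U, p u ≤ 1) :
    μ {ω | V ω ≤ p (U ω)} = ∫⁻ u, ENNReal.ofReal (p u) ∂μ.map U := by
  have hS : MeasurableSet {x : ℝ × ℝ | x.2 ≤ p x.1} :=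
    measurableSet_le measurable_snd (hp.comp measurable_fst)
  have hsection : ∀ u, p u ≤ 1 →
      volume.restrict (Icc (0 : ℝ) 1) (Prod.mk u ⁻¹' {x : ℝ × ℝ | x.2 ≤ p x.1})
        = ENNReal.ofReal (p u) := by
    intro u hu
    rw [show Prod.mk u ⁻¹' {x : ℝ × ℝ | x.2 ≤ p x.1} = Iic (p u) from rfl,
      Measure.restrict_apply measurableSet_Iic, inter_comm, ← Ici_inter_Iic, inter_assoc,
      Iic_inter_Iic, inf_eq_right.mpr hu, Ici_inter_Iic, Real.volume_Icc, sub_zero]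
  change μ ((fun ω => (U ω, V ω)) ⁻¹' {x : ℝ × ℝ | x.2 ≤ p x.1}) = _
  rw [← Measure.map_apply (hU.prodMk hV) hS,
    (indepFun_iff_map_prod_eq_prod_map_map hU.aemeasurable hV.aemeasurable).mp hUV,
    Measure.prod_apply hS, hVlaw]
  exact lintegral_congr_ae (hp1.mono hsection)

theorem IndepFun.measure_thinning_reject [IsFiniteMeasure μ] {a b L : ℝ}
    (hab : a < b) (hL : 0 < L) {lam : ℝ → ℝ} (hlam : Measurable lam)
    (hrange : ∀ s ∈ Icc a b, lam s ∈ Icc 0 L) {U V : Ω → ℝ} (hU : Measurable U)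
    (hV : Measurable V) (hUV : IndepFun U V μ)
    (hUlaw : μ.map U = (ENNReal.ofReal (b - a))⁻¹ • volume.restrict (Icc a b))
    (hVlaw : μ.map V = volume.restrict (Icc 0 1)) :
    μ {ω | V ω ≤ (L - lam (U ω)) / L}
      = ENNReal.ofReal (1 - (∫ s in a..b, lam s) / (L * (b - a))) := by
  have hlamI := integrableOn_Icc_of_mem_Icc hlam hrange
  have hp1 : ∀ᵐ u ∂μ.map U, (L - lam u) / L ≤ 1 := by
    rw [hUlaw]
    refine Measure.ae_smul_measure (ae_restrict_of_forall_mem measurableSet_Icc fun u hu => ?_) _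
    rw [div_le_one hL]; linarith [(hrange u hu).1]
  rw [hUV.measure_le_comp_eq_lintegral hU hV hVlaw (p := fun u => (L - lam u) / L)
      (by fun_prop) hp1,
    hUlaw, lintegral_ofReal_uniform_Icc hab (f := fun u => (L - lam u) / L)
      (((integrable_const L).sub hlamI).div_const L)
      fun u hu => div_nonneg (by linarith [(hrange u hu).2]) hL.le,
    intervalIntegral.integral_div, intervalIntegral.integral_sub intervalIntegrable_const
      ((intervalIntegrable_iff_integrableOn_Icc_of_le hab.le).mpr hlamI),
    intervalIntegral.integral_const, smul_eq_mul]
  congr 1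
  field_simp [(sub_pos.mpr hab).ne']

theorem iIndepFun.measure_thinning_reject_all {K : Ω → ℕ}
    {U V : ℕ → Ω → ℝ} (hKm : Measurable K) (hUm : ∀ i, Measurable (U i))
    (hVm : ∀ i, Measurable (V i))
    (hindep : iIndepFun
      (fun o : Option (ℕ ⊕ ℕ) => o.elim (fun ω => (K ω : ℝ)) (Sum.elim U V)) μ)
    {p : ℝ → ℝ} (hp : Measurable p) {r : ENNReal} (hr : ∀ i, μ {ω | V i ω ≤ p (U i ω)} = r) :
    μ {ω | ∀ i < K ω, V i ω ≤ p (U i ω)} = ∑' k, μ {ω | K ω = k} * r ^ k := by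
  set X := fun o : Option (ℕ ⊕ ℕ) => o.elim (fun ω => (K ω : ℝ)) (Sum.elim U V)
  have hXm : ∀ o, Measurable (X o) := by
    rintro (_ | i | i)
    exacts [measurable_from_top.comp hKm, hUm i, hVm i]
  -- the block `none` carries `K`, the block `some i` carries `(U i, V i)`
  set g : Option (ℕ ⊕ ℕ) → Option ℕ := Option.map (Sum.elim id id)
  set M : Option ℕ → MeasurableSpace Ω := fun j =>
    ⨆ o ∈ g ⁻¹' {j}, MeasurableSpace.comap (X o) inferInstance
  have hXM : ∀ o, MeasurableSpace.comap (X o) inferInstance ≤ M (g o) := fun o =>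
    le_iSup₂ (f := fun o' (_ : o' ∈ g ⁻¹' {g o}) => MeasurableSpace.comap (X o') inferInstance)
      o rfl
  have hKM : Measurable[M none] K := @measurable_to_countable' ℕ Ω _ _ (M none) K fun k =>
    hXM none _ ⟨{(k : ℝ)}, measurableSet_singleton _, by ext; simp [X]⟩
  have hCM : ∀ i, MeasurableSet[M (some i)] {ω | V i ω ≤ p (U i ω)} := fun i =>
    (Measurable.of_comap_le (hXM (some (.inl i)))).prodMk
      (Measurable.of_comap_le (hXM (some (.inr i))))
      (measurableSet_le measurable_snd (hp.comp measurable_fst))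
  exact (hindep.iIndep.iIndep_biSup (fun o => (hXm o).comap_le) (pairwise_disjoint_fiber g))
    |>.measure_forall_lt_mem (fun j => iSup₂_le fun o _ => (hXm o).comap_le) hKM hCM hr

end ProbabilityTheory

end

/-- Thinning-based unbiased coin for the survival probability of a Poisson process:
`E[∏_{i<K} 1{V_i ≤ (λmax - λ(U_i))/λmax}] = exp(-∫_{t₀}^{t₁} λ(s) ds)`. -/
theorem cox_thinning_coin_unbiased {Ω : Type*} [MeasurableSpace Ω]
    (μ : Measure Ω) [IsProbabilityMeasure μ]
    (t₀ t₁ lamMax : ℝ) (ht : t₀ < t₁) (hlam : 0 < lamMax)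
    (lam : ℝ → ℝ) (hlamm : Measurable lam)
    (hrange : ∀ s ∈ Set.Icc t₀ t₁, lam s ∈ Set.Icc (0:ℝ) lamMax)
    (K : Ω → ℕ) (U V : ℕ → Ω → ℝ)
    (hKm : Measurable K) (hUm : ∀ i, Measurable (U i)) (hVm : ∀ i, Measurable (V i))
    -- K ~ Poisson(λmax (t₁ - t₀))
    (hK : ∀ k : ℕ, μ {ω | K ω = k}
      = ENNReal.ofReal (Real.exp (-(lamMax * (t₁ - t₀))) * (lamMax * (t₁ - t₀)) ^ k
          / Nat.factorial k))
    -- U_i ~ Unif[t₀,t₁], V_i ~ Unif[0,1]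
    (hU : ∀ i, μ.map (U i) = (ENNReal.ofReal (t₁ - t₀))⁻¹ • volume.restrict (Set.Icc t₀ t₁))
    (hV : ∀ i, μ.map (V i) = volume.restrict (Set.Icc (0:ℝ) 1))
    -- K, the U_i and the V_i are all independent
    (hindep : iIndepFun
      (fun o : Option (ℕ ⊕ ℕ) => o.elim (fun ω => (K ω : ℝ)) (Sum.elim U V)) μ) :
    ∫ ω, ∏ i ∈ Finset.range (K ω),
        (if V i ω ≤ (lamMax - lam (U i ω)) / lamMax then (1:ℝ) else 0) ∂μ
      = Real.exp (-∫ s in t₀..t₁, lam s) := by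
  set I := ∫ s in t₀..t₁, lam s
  set Λ := lamMax * (t₁ - t₀)
  have hΛ : 0 < Λ := mul_pos hlam (sub_pos.mpr ht)
  have hIΛ : I ≤ Λ := calc
    I ≤ ∫ _ in t₀..t₁, lamMax := intervalIntegral.integral_mono_on ht.le
        ((intervalIntegrable_iff_integrableOn_Icc_of_le ht.le).mpr
          (integrableOn_Icc_of_mem_Icc hlamm hrange))
        intervalIntegrable_const fun s hs => (hrange s hs).2
    _ = Λ := by simp [Λ, mul_comm]
  have hp : Measurable fun u => (lamMax - lam u) / lamMax := by fun_prop
  have hreject : ∀ i, μ {ω | V i ω ≤ (lamMax - lam (U i ω)) / lamMax}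
      = ENNReal.ofReal (1 - I / Λ) := fun i =>
    (hindep.indepFun (i := some (.inl i)) (j := some (.inr i)) (by simp)).measure_thinning_reject
      ht hlam hlamm hrange (hUm i) (hVm i) (hU i) (hV i)
  rw [integral_prod_range_ite_eq_measureReal hKm
      (P := fun i ω => V i ω ≤ (lamMax - lam (U i ω)) / lamMax)
      fun i => measurableSet_le (hVm i) (hp.comp (hUm i)),
    measureReal_def, hindep.measure_thinning_reject_all hKm hUm hVm hp hreject]
  simp_rw [hK]
  rw [ENNReal.tsum_ofReal_poisson_mul_pow hΛ.le (sub_nonneg.mpr ((div_le_one hΛ).mpr hIΛ)),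
    sub_sub_cancel, mul_div_cancel₀ _ hΛ.ne', ENNReal.toReal_ofReal (Real.exp_pos _).le]
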